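/- Let α > 0 be real and z, λ ∈ ℂ. For q ≥ 1, the determinant of the q×q upper-Hessenberg matrix M^{(q)} with entries M_{j,k} := z·(1/k)·C(k, j−1)·α^{k−j+1} − λ·[j = k] for j ≤ k, M_{j+1,j} := z/j on the subdiagonal, and 0 below the subdiagonal, is given explicitly by det M^{(q)} = Σ_{j=0}^{q} ((j+1)·αz)^{q−j}/(q−j)! · (−λ)^{j}. -/

import Mathlib

open Finset

/-- The q×q upper-Hessenberg matrix `M^{(q)}` (1-based indices `J = j+1`, `K = k+1`):
`M_{J,K} = z·(1/K)·C(K,J−1)·α^{K−J+1} − λ·[J=K]` for `J ≤ K`, `M_{K+1,K} = z/K` on the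
subdiagonal, and `0` below the subdiagonal. -/
noncomputable def hessM (α : ℝ) (z l : ℂ) (q : ℕ) : Matrix (Fin q) (Fin q) ℂ :=
  fun j k =>
    if j.1 ≤ k.1 then
      z * (1 / ((k.1 + 1 : ℕ) : ℂ)) * ((Nat.choose (k.1 + 1) j.1 : ℕ) : ℂ)
          * (α : ℂ) ^ (k.1 + 1 - j.1)
        - (if j = k then l else 0)
    else if j.1 = k.1 + 1 then z / ((k.1 + 1 : ℕ) : ℂ)
    else 0

/-! Expanding the determinant of an upper Hessenberg matrix along its last column, the minor
obtained by deleting row `i` is block triangular: the leading `i × i` principal minor, and a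
triangular block carrying the subdiagonal entries `z/(r+1)`. For `D_n = det M^{(n)}`, with
`t = αz` and `u = -λ`, this gives `D_0 = 1` and
`Σ_{i ≤ n+1} (-t)^{n+1-i}/(n+1-i)! · D_i = u · D_n`, i.e. `e^{-tx} D(x) = 1 + u x D(x)` for the
generating function `D(x) = Σ D_n x^n`. The explicit sum is the coefficient sequence of
`Σ_j (ux)^j e^{(j+1)tx} = e^{tx} / (1 - u x e^{tx})`, which satisfies the same relation; on
coefficients this is the binomial theorem in the form
`(a + b)^m / m! = Σ_k a^k/k! · b^{m-k}/(m-k)!`. -/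

open Nat

section Hessenberg

variable {R : Type*} [CommRing R]

def leadingBlock (h : ℕ → ℕ → R) (n : ℕ) : Matrix (Fin n) (Fin n) R := fun i j => h i j

theorem det_leadingBlock_eq_mul_prod_diag (g : ℕ → ℕ → R) {J n : ℕ} (hJn : J ≤ n)
    (hg : ∀ r c, J ≤ r → c < r → g r c = 0) :
    (leadingBlock g n).det = (leadingBlock g J).det * ∏ r ∈ Ico J n, g r r := by
  induction n, hJn using Nat.le_induction with
  | base => simp
  | succ n hJn ih =>
    rw [Matrix.det_succ_row _ (Fin.last n), sum_eq_single (Fin.last n), prod_Ico_succ_top hJn,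
      Fin.succAbove_last]
    · simp only [Fin.val_last, Even.neg_one_pow ⟨n, rfl⟩, one_mul]
      rw [show (leadingBlock g (n + 1)).submatrix Fin.castSucc Fin.castSucc = leadingBlock g n
        from rfl, ih]
      simp only [leadingBlock, Fin.val_last]
      ring
    · intro c _ hc
      have : g n c = 0 := hg n c hJn (by simpa using Fin.val_lt_last hc)
      simp [leadingBlock, this]
    · simp

theorem det_leadingBlock_succ_of_hessenberg (h : ℕ → ℕ → R)
    (hh : ∀ i j, j + 1 < i → h i j = 0) (n : ℕ) :
    (leadingBlock h (n + 1)).det = ∑ i ∈ range (n + 1),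
      (-1) ^ (i + n) * h i n * (∏ r ∈ Ico i n, h (r + 1) r) * (leadingBlock h i).det := by
  rw [Matrix.det_succ_column _ (Fin.last n), ← Fin.sum_univ_eq_sum_range]
  refine sum_congr rfl fun i _ => ?_
  let g : ℕ → ℕ → R := fun r c => h (if r < i then r else r + 1) c
  have hminor : (leadingBlock h (n + 1)).submatrix i.succAbove (Fin.last n).succAbove
      = leadingBlock g n := by
    ext r c
    simp only [Fin.succAbove_last, Matrix.submatrix_apply, leadingBlock, g, Fin.succAbove,
      Fin.lt_def, Fin.val_castSucc]
    split_ifs <;> simp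
  have hg : ∀ r c, (i : ℕ) ≤ r → c < r → g r c = 0 := fun r c hr hc => by
    simp only [g, if_neg (not_lt.2 hr)]
    exact hh _ _ (by omega)
  rw [hminor, det_leadingBlock_eq_mul_prod_diag g i.is_le hg]
  have hblock : leadingBlock g i = leadingBlock h i := by
    ext r c
    simp [leadingBlock, g]
  have hdiag : ∏ r ∈ Ico (i : ℕ) n, g r r = ∏ r ∈ Ico (i : ℕ) n, h (r + 1) r :=
    prod_congr rfl fun r hr => by simp [g, not_lt.2 (mem_Ico.1 hr).1]
  rw [hblock, hdiag, Fin.val_last]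
  simp only [leadingBlock, Fin.val_last]
  ring

end Hessenberg

section Factorials

variable {K : Type*} [Field K] [CharZero K]

theorem add_pow_div_factorial (a b : K) (m : ℕ) :
    (a + b) ^ m / m ! = ∑ k ∈ range (m + 1), a ^ k / k ! * (b ^ (m - k) / (m - k)!) := by
  rw [add_pow, sum_div]
  refine sum_congr rfl fun k hk => ?_
  have hm : (m ! : K) ≠ 0 := Nat.cast_ne_zero.2 (factorial_ne_zero m)
  rw [Nat.cast_choose K (mem_range_succ_iff.1 hk)]
  field_simp

theorem prod_Ico_div_succ (z : K) {i n : ℕ} (hin : i ≤ n) :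
    ∏ r ∈ Ico i n, z / (r + 1 : ℕ) = z ^ (n - i) * i ! / n ! := by
  induction n, hin using Nat.le_induction with
  | base =>
    simp only [Ico_self, prod_empty, Nat.sub_self, pow_zero, one_mul]
    exact (div_self (Nat.cast_ne_zero.2 (factorial_ne_zero i))).symm
  | succ n hin ih =>
    rw [prod_Ico_succ_top hin, ih, Nat.sub_add_comm hin, pow_succ, factorial_succ, cast_mul]
    field_simp

def hessDetPoly (t u : K) (n : ℕ) : K :=
  ∑ j ∈ range (n + 1), (((j + 1 : ℕ) : K) * t) ^ (n - j) / ((n - j)! : K) * u ^ j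

theorem sum_neg_pow_div_factorial_mul_hessDetPoly (t u : K) (N : ℕ) :
    ∑ i ∈ range (N + 1), (-t) ^ (N - i) / ((N - i)! : K) * hessDetPoly t u i
      = ∑ j ∈ range (N + 1), ((j : K) * t) ^ (N - j) / ((N - j)! : K) * u ^ j := by
  simp only [hessDetPoly, mul_sum, range_eq_Ico]
  rw [← sum_Ico_Ico_comm]
  refine sum_congr rfl fun j hj => ?_
  have hjN : j ≤ N := Nat.lt_succ_iff.1 (mem_Ico.1 hj).2
  rw [sum_Ico_eq_sum_range, show N + 1 - j = N - j + 1 by omega,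
    show (j : K) * t = ((j + 1 : ℕ) : K) * t + -t by push_cast; ring, add_pow_div_factorial,
    sum_mul]
  refine sum_congr rfl fun k hk => ?_
  have hk : k ≤ N - j := mem_range_succ_iff.1 hk
  rw [show N - (j + k) = N - j - k by omega, Nat.add_sub_cancel_left]
  ring

theorem hessDetPoly_succ (t u : K) (n : ℕ) :
    hessDetPoly t u (n + 1) = u * hessDetPoly t u n
      - ∑ i ∈ range (n + 1), (-t) ^ (n + 1 - i) / ((n + 1 - i)! : K) * hessDetPoly t u i := by
  have h := sum_neg_pow_div_factorial_mul_hessDetPoly t u (n + 1)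
  conv_lhs at h => rw [sum_range_succ]
  conv_rhs at h => rw [sum_range_succ']
  have hshift : ∑ j ∈ range (n + 1), (((j + 1 : ℕ) : K) * t) ^ (n + 1 - (j + 1))
      / ((n + 1 - (j + 1))! : K) * u ^ (j + 1) = u * hessDetPoly t u n := by
    simp only [hessDetPoly, mul_sum, Nat.add_sub_add_right]
    exact sum_congr rfl fun j _ => by ring
  simp only [Nat.sub_self, Nat.sub_zero, pow_zero, factorial_zero, cast_one, div_one, one_mul,
    hshift, cast_zero, zero_mul, zero_pow (succ_ne_zero n), zero_div, add_zero] at h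
  linear_combination h

end Factorials

section HessenbergEntries

variable {K : Type*} [Field K]

/-- A single formula for all entries of `hessM`: the binomial coefficient gives `z / (k + 1)` on
the subdiagonal and vanishes below it. -/
def hessEntry (a z l : K) (j k : ℕ) : K :=
  z / (k + 1 : ℕ) * (k + 1).choose j * a ^ (k + 1 - j) - if j = k then l else 0

theorem hessM_eq_leadingBlock (α : ℝ) (z l : ℂ) (q : ℕ) :
    hessM α z l q = leadingBlock (hessEntry (α : ℂ) z l) q := by
  ext j k
  simp only [hessM, leadingBlock, hessEntry, Fin.ext_iff]
  rcases lt_trichotomy (j : ℕ) (k + 1) with h | h | h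
  · rw [if_pos (by omega)]
    ring
  · rw [if_neg (by omega), if_pos h, if_neg (by omega), h]
    simp
  · rw [if_neg (by omega), if_neg (by omega), if_neg (by omega), Nat.choose_eq_zero_of_lt h]
    simp

theorem hessEntry_eq_zero_of_lt (a z l : K) {j k : ℕ} (h : k + 1 < j) :
    hessEntry a z l j k = 0 := by
  simp [hessEntry, Nat.choose_eq_zero_of_lt h, show j ≠ k by omega]

theorem hessEntry_succ_self (a z l : K) (k : ℕ) :
    hessEntry a z l (k + 1) k = z / (k + 1 : ℕ) := by
  simp [hessEntry]

theorem neg_one_pow_mul_hessEntry_mul_prod [CharZero K] (a z l : K) {i n : ℕ} (hin : i ≤ n) :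
    (-1) ^ (i + n) * hessEntry a z l i n * ∏ r ∈ Ico i n, hessEntry a z l (r + 1) r
      = -((-(a * z)) ^ (n + 1 - i) / (n + 1 - i)! + if i = n then l else 0) := by
  obtain ⟨d, rfl⟩ := Nat.exists_eq_add_of_le hin
  have hsign : (-1 : K) ^ (i + (i + d)) = -(-1) ^ (d + 1) := by
    rw [← add_assoc, ← two_mul, pow_add, pow_mul, pow_succ]
    simp
  have hchoose : ((i + d + 1).choose i : K) = (i + d + 1)! / (i ! * (d + 1)!) := by
    rw [Nat.cast_choose K (by omega), show i + d + 1 - i = d + 1 by omega]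
  have hi : (i ! : K) ≠ 0 := Nat.cast_ne_zero.2 (factorial_ne_zero i)
  have hd : ((d + 1)! : K) ≠ 0 := Nat.cast_ne_zero.2 (factorial_ne_zero (d + 1))
  have hid : ((i + d)! : K) ≠ 0 := Nat.cast_ne_zero.2 (factorial_ne_zero (i + d))
  have hn : ((i + d + 1 : ℕ) : K) ≠ 0 := Nat.cast_ne_zero.2 (succ_ne_zero (i + d))
  rw [prod_congr rfl fun r _ => hessEntry_succ_self a z l r, prod_Ico_div_succ z hin, hessEntry,
    hchoose, hsign, show i + d + 1 - i = d + 1 by omega, Nat.add_sub_cancel_left,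
    factorial_succ (i + d), cast_mul]
  split_ifs with h
  · obtain rfl : d = 0 := by omega
    simp only [Nat.add_zero]
    field_simp
    ring
  · field_simp
    ring

theorem det_leadingBlock_hessEntry [CharZero K] (a z l : K) (n : ℕ) :
    (leadingBlock (hessEntry a z l) n).det = hessDetPoly (a * z) (-l) n := by
  induction n using Nat.strong_induction_on with
  | _ n ih =>
    rcases n with _ | n
    · simp [hessDetPoly]
    have hterm : ∀ i ∈ range (n + 1),
        (-1) ^ (i + n) * hessEntry a z l i n * (∏ r ∈ Ico i n, hessEntry a z l (r + 1) r)
            * (leadingBlock (hessEntry a z l) i).det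
          = -((-(a * z)) ^ (n + 1 - i) / (n + 1 - i)! * hessDetPoly (a * z) (-l) i)
            - if i = n then l * hessDetPoly (a * z) (-l) n else 0 := fun i hi => by
      have hin := mem_range_succ_iff.1 hi
      rw [neg_one_pow_mul_hessEntry_mul_prod a z l hin, ih i (by omega)]
      split_ifs with h
      · subst h; ring
      · ring
    rw [det_leadingBlock_succ_of_hessenberg _ (fun _ _ => hessEntry_eq_zero_of_lt a z l),
      hessDetPoly_succ, sum_congr rfl hterm, sum_sub_distrib, sum_neg_distrib,
      sum_ite_eq' (range (n + 1)) n, if_pos (self_mem_range_succ n)]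
    ring

end HessenbergEntries

theorem hessM_det_general (α : ℝ) (z l : ℂ) (q : ℕ) :
    (hessM α z l q).det
      = ∑ j ∈ range (q + 1),
          (((j + 1 : ℕ) : ℂ) * ((α : ℂ) * z)) ^ (q - j)
            / ((Nat.factorial (q - j) : ℂ)) * (-l) ^ j := by
  rw [hessM_eq_leadingBlock, det_leadingBlock_hessEntry]
  rfl

/-- `det M^{(q)} = Σ_{j=0}^{q} ((j+1)·αz)^{q−j}/(q−j)! · (−λ)^j`. -/
theorem hessM_det (α : ℝ) (hα : 0 < α) (z l : ℂ) (q : ℕ) (hq : 1 ≤ q) :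
    (hessM α z l q).det
      = ∑ j ∈ range (q + 1),
          (((j + 1 : ℕ) : ℂ) * ((α : ℂ) * z)) ^ (q - j)
            / ((Nat.factorial (q - j) : ℂ)) * (-l) ^ j :=
  hessM_det_general α z l q
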